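/- In the SupLinUCB-S setting, for each agent i and stage s, if the final index set satisfies |Ψ_{i,T+1}^s| ≥ 2, then Σ_{t ∈ Ψ_{i,T+1}^s} s_{i,t} ≤ 5 √(d · |Ψ_{i,T+1}^s| · ln|Ψ_{i,T+1}^s|), where for each t ∈ Ψ_{i,T+1}^s the matrix A_{i,t} is built from the contexts with indices in Ψ_{i,t}^s = Ψ_{i,T+1}^s ∩ {1,…,t−1} and the index sets grow one element at a time (Ψ_{i,t+1}^s = Ψ_{i,t}^s ∪ {t} exactly when t ∈ Ψ_{i,T+1}^s). -/

import Mathlib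

/-!
The squared width `w_t = x_tᵀ A_t⁻¹ x_t` lies in `[0, 1]`, and by the matrix determinant lemma
adding `x_t` to the design multiplies `det A` by `1 + w_t`. As `w ≤ 2 log (1 + w)` on `[0, 1]`,
`∑ w_t ≤ 2 log det A_Ψ` (elliptical potential lemma). Every eigenvalue of `A_Ψ` is a Rayleigh
quotient `1 + ∑ (x_τᵀ v)² ≤ 1 + |Ψ|`, so `∑ w_t ≤ 2 d log (1 + |Ψ|) ≤ 4 d log |Ψ|`, and
Cauchy–Schwarz gives `∑ √w_t ≤ √(|Ψ| ∑ w_t) ≤ 2 √(d |Ψ| log |Ψ|)`.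
-/

open Matrix Finset

namespace Matrix

variable {n : Type*} [Fintype n]

theorem sq_dotProduct_le (u v : n → ℝ) : (u ⬝ᵥ v) ^ 2 ≤ (u ⬝ᵥ u) * (v ⬝ᵥ v) := by
  simpa only [dotProduct, sq] using Finset.sum_mul_sq_le_sq_mul_sq univ u v

theorem dotProduct_vecMulVec_self_mulVec (w v : n → ℝ) :
    v ⬝ᵥ vecMulVec w w *ᵥ v = (w ⬝ᵥ v) ^ 2 := by
  rw [vecMulVec_mulVec, dotProduct_smul, op_smul_eq_mul, dotProduct_comm, sq]

theorem det_add_vecMulVec {R : Type*} [CommRing R] [DecidableEq n] {A : Matrix n n R}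
    (hA : IsUnit A.det) (u v : n → R) :
    (A + vecMulVec u v).det = A.det * (1 + v ⬝ᵥ A⁻¹ *ᵥ u) := by
  rw [vecMulVec_eq Unit, det_add_replicateCol_mul_replicateRow hA, det_unique (n := Unit),
    Matrix.mul_assoc, ← replicateCol_mulVec]
  simp [replicateRow_mul_replicateCol_apply]

theorem dotProduct_inv_mulVec_mem_Icc {A : Matrix n n ℝ} [DecidableEq n] (hA : IsUnit A.det)
    (hA1 : ∀ v, v ⬝ᵥ v ≤ v ⬝ᵥ A *ᵥ v) (x : n → ℝ) :
    x ⬝ᵥ A⁻¹ *ᵥ x ∈ Set.Icc 0 (x ⬝ᵥ x) := by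
  set y := A⁻¹ *ᵥ x
  -- `y` solves `A y = x`, so `xᵀ A⁻¹ x = yᵀ A y ≥ yᵀ y`; Cauchy–Schwarz does the rest.
  have hxy : x ⬝ᵥ y = y ⬝ᵥ A *ᵥ y := by
    rw [mulVec_mulVec, mul_nonsing_inv _ hA, one_mulVec, dotProduct_comm]
  have hyy : y ⬝ᵥ y ≤ x ⬝ᵥ y := hxy ▸ hA1 y
  have hy0 : 0 ≤ y ⬝ᵥ y := dotProduct_self_star_nonneg y
  have hx0 : 0 ≤ x ⬝ᵥ x := dotProduct_self_star_nonneg x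
  have hcs := sq_dotProduct_le x y
  exact ⟨hy0.trans hyy, by nlinarith⟩

theorem PosSemidef.det_le_pow {A : Matrix n n ℝ} [DecidableEq n] (hA : A.PosSemidef) {c : ℝ}
    (hAc : ∀ v, v ⬝ᵥ A *ᵥ v ≤ c * (v ⬝ᵥ v)) : A.det ≤ c ^ Fintype.card n := by
  have h_le : ∀ i, hA.1.eigenvalues i ≤ c := fun i => by
    have hv : hA.1.eigenvectorBasis i ⬝ᵥ hA.1.eigenvectorBasis i = 1 := by
      have := hA.1.eigenvectorBasis.orthonormal.1 i
      rw [EuclideanSpace.norm_eq] at this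
      simpa [dotProduct, ← sq] using this
    simpa [hA.1.eigenvalues_eq, hv] using hAc (hA.1.eigenvectorBasis i)
  rw [hA.1.det_eq_prod_eigenvalues, ← Finset.card_univ, ← Finset.prod_const]
  exact_mod_cast Finset.prod_le_prod (fun i _ => hA.eigenvalues_nonneg i) fun i _ => h_le i

end Matrix

section DesignMatrix

variable {ι n : Type*} [Fintype n] [DecidableEq n]

/-- The paper's `A_{i,t}` for `Ψ_{i,t} = S`. -/
noncomputable def designMatrix (x : ι → n → ℝ) (S : Finset ι) : Matrix n n ℝ :=
  1 + ∑ τ ∈ S, vecMulVec (x τ) (x τ)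

theorem dotProduct_designMatrix_mulVec (x : ι → n → ℝ) (S : Finset ι) (v : n → ℝ) :
    v ⬝ᵥ designMatrix x S *ᵥ v = v ⬝ᵥ v + ∑ τ ∈ S, (x τ ⬝ᵥ v) ^ 2 := by
  simp only [designMatrix, add_mulVec, one_mulVec, dotProduct_add, sum_mulVec, dotProduct_sum,
    dotProduct_vecMulVec_self_mulVec]

theorem self_dotProduct_le_dotProduct_designMatrix_mulVec (x : ι → n → ℝ) (S : Finset ι)
    (v : n → ℝ) : v ⬝ᵥ v ≤ v ⬝ᵥ designMatrix x S *ᵥ v := by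
  rw [dotProduct_designMatrix_mulVec]
  exact le_add_of_nonneg_right (sum_nonneg fun τ _ => sq_nonneg _)

theorem designMatrix_posDef (x : ι → n → ℝ) (S : Finset ι) : (designMatrix x S).PosDef :=
  PosDef.one.add_posSemidef <| posSemidef_sum S fun τ _ => by
    simpa using posSemidef_vecMulVec_self_star (x τ)

theorem isUnit_det_designMatrix (x : ι → n → ℝ) (S : Finset ι) :
    IsUnit (designMatrix x S).det :=
  (designMatrix_posDef x S).det_pos.ne'.isUnit

theorem det_designMatrix_insert [DecidableEq ι] (x : ι → n → ℝ) {S : Finset ι} {m : ι}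
    (hm : m ∉ S) : (designMatrix x (insert m S)).det =
      (designMatrix x S).det * (1 + x m ⬝ᵥ (designMatrix x S)⁻¹ *ᵥ x m) := by
  rw [← det_add_vecMulVec (isUnit_det_designMatrix x S), designMatrix, designMatrix,
    sum_insert hm]
  congr 1
  abel

theorem det_designMatrix_le (x : ι → n → ℝ) (hx : ∀ τ, x τ ⬝ᵥ x τ ≤ 1) (S : Finset ι) :
    (designMatrix x S).det ≤ (1 + #S) ^ Fintype.card n := by
  refine (designMatrix_posDef x S).posSemidef.det_le_pow fun v => ?_
  have h_sum : ∑ τ ∈ S, (x τ ⬝ᵥ v) ^ 2 ≤ #S * (v ⬝ᵥ v) := by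
    rw [← nsmul_eq_mul, ← sum_const]
    exact sum_le_sum fun τ _ => (sq_dotProduct_le _ _).trans <|
      mul_le_of_le_one_left (dotProduct_self_star_nonneg v) (hx τ)
  rw [dotProduct_designMatrix_mulVec]
  linarith

theorem log_det_designMatrix_le (x : ι → n → ℝ) (hx : ∀ τ, x τ ⬝ᵥ x τ ≤ 1) (S : Finset ι) :
    Real.log (designMatrix x S).det ≤ Fintype.card n * Real.log (1 + #S) := by
  rw [← Real.log_pow]
  exact Real.log_le_log (designMatrix_posDef x S).det_pos (det_designMatrix_le x hx S)

end DesignMatrix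

theorem Real.sum_sqrt_le_sqrt_card_mul_sum {ι : Type*} (s : Finset ι) {f : ι → ℝ}
    (hf : ∀ i, 0 ≤ f i) : ∑ i ∈ s, √(f i) ≤ √(#s * ∑ i ∈ s, f i) := by
  rw [Real.sqrt_mul (Nat.cast_nonneg _), mul_comm]
  simpa using Real.sum_sqrt_mul_sqrt_le s hf (fun _ => zero_le_one)

theorem Real.le_two_mul_log_one_add {u : ℝ} (h0 : 0 ≤ u) (h1 : u ≤ 1) :
    u ≤ 2 * Real.log (1 + u) := by
  have h := Real.le_log_one_add_of_nonneg h0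
  rw [div_le_iff₀ (by linarith)] at h
  nlinarith

theorem sum_dotProduct_inv_designMatrix_mulVec_le {ι n : Type*} [LinearOrder ι] [Fintype n]
    [DecidableEq n] (x : ι → n → ℝ) (hx : ∀ τ, x τ ⬝ᵥ x τ ≤ 1) (S : Finset ι) :
    ∑ t ∈ S, x t ⬝ᵥ (designMatrix x (S.filter (· < t)))⁻¹ *ᵥ x t
      ≤ 2 * Real.log (designMatrix x S).det := by
  induction S using Finset.induction_on_max with
  | empty => simp [designMatrix]
  | insert a S hlt ih =>
    have ha : a ∉ S := fun h => (hlt a h).false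
    have h_filter_a : (insert a S).filter (· < a) = S := by
      rw [filter_insert, if_neg (lt_irrefl a), filter_true_of_mem hlt]
    have h_filter_lt : ∀ t ∈ S, (insert a S).filter (· < t) = S.filter (· < t) := fun t ht => by
      rw [filter_insert, if_neg (hlt t ht).not_gt]
    obtain ⟨hu0, hu1⟩ := dotProduct_inv_mulVec_mem_Icc (isUnit_det_designMatrix x S)
      (self_dotProduct_le_dotProduct_designMatrix_mulVec x S) (x a)
    rw [sum_insert ha, sum_congr rfl fun t ht => by rw [h_filter_lt t ht], h_filter_a,
      det_designMatrix_insert x ha, Real.log_mul (designMatrix_posDef x S).det_pos.ne'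
        (by linarith)]
    linarith [Real.le_two_mul_log_one_add hu0 (hu1.trans (hx a))]

theorem sum_width_bound_general
    {d : ℕ} (x : ℕ → Fin d → ℝ)
    (hx : ∀ t, ∑ j, (x t j) ^ 2 ≤ 1)
    (Ψ : Finset ℕ) (hΨ : 2 ≤ Ψ.card) :
    ∑ t ∈ Ψ,
        Real.sqrt (x t ⬝ᵥ
          (((1 : Matrix (Fin d) (Fin d) ℝ) +
              ∑ τ ∈ Ψ.filter (· < t), vecMulVec (x τ) (x τ))⁻¹ *ᵥ x t))
      ≤ 5 * Real.sqrt (d * Ψ.card * Real.log Ψ.card) := by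
  change ∑ t ∈ Ψ, √(x t ⬝ᵥ (designMatrix x (Ψ.filter (· < t)))⁻¹ *ᵥ x t) ≤ _
  set w : ℕ → ℝ := fun t => x t ⬝ᵥ (designMatrix x (Ψ.filter (· < t)))⁻¹ *ᵥ x t
  have hx' : ∀ t, x t ⬝ᵥ x t ≤ 1 := fun t => by simpa [dotProduct, sq] using hx t
  have hw : ∀ t, 0 ≤ w t := fun t => (dotProduct_inv_mulVec_mem_Icc
    (isUnit_det_designMatrix x _) (self_dotProduct_le_dotProduct_designMatrix_mulVec x _) _).1
  have hn : (2 : ℝ) ≤ #Ψ := by exact_mod_cast hΨ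
  have h_sum : ∑ t ∈ Ψ, w t ≤ 4 * d * Real.log #Ψ := calc
    _ ≤ 2 * Real.log (designMatrix x Ψ).det := sum_dotProduct_inv_designMatrix_mulVec_le x hx' Ψ
    _ ≤ 2 * (d * Real.log (1 + #Ψ)) := by
      simpa using mul_le_mul_of_nonneg_left (log_det_designMatrix_le x hx' Ψ) zero_le_two
    _ ≤ 2 * (d * Real.log (#Ψ ^ 2)) := by gcongr; nlinarith
    _ = 4 * d * Real.log #Ψ := by rw [Real.log_pow]; push_cast; ring
  calc ∑ t ∈ Ψ, √(w t) ≤ √(#Ψ * ∑ t ∈ Ψ, w t) := Real.sum_sqrt_le_sqrt_card_mul_sum Ψ hw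
    _ ≤ √(2 ^ 2 * (d * #Ψ * Real.log #Ψ)) := Real.sqrt_le_sqrt <| by
      linarith [mul_le_mul_of_nonneg_left h_sum (Nat.cast_nonneg (α := ℝ) #Ψ)]
    _ = 2 * √(d * #Ψ * Real.log #Ψ) := by
      rw [Real.sqrt_mul' _ (by positivity), Real.sqrt_sq zero_le_two]
    _ ≤ 5 * √(d * #Ψ * Real.log #Ψ) := by gcongr; norm_num

/-- **Lemma 2 (after Chu et al., Lemma 3).** Let `x_t ∈ [0,1]^d` with `‖x_t‖₂ ≤ 1` be a
sequence of contexts and let `Ψ ⊆ ℕ` be a finite index set of rounds with `|Ψ| ≥ 2`,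
the index sets growing one element at a time: at round `t ∈ Ψ`, the matrix
`A_t = I_d + ∑_{τ ∈ Ψ, τ < t} x_τ x_τᵀ` is built from the contexts with indices in
`Ψ ∩ {0, …, t−1}`.  Then, with `s_t = √(x_tᵀ A_t⁻¹ x_t)`,
`∑_{t ∈ Ψ} s_t ≤ 5 √(d · |Ψ| · ln |Ψ|)`. -/
theorem sum_width_bound
    {d : ℕ} (x : ℕ → Fin d → ℝ)
    (hx01 : ∀ t j, x t j ∈ Set.Icc (0 : ℝ) 1)
    (hx : ∀ t, ∑ j, (x t j) ^ 2 ≤ 1)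
    (Ψ : Finset ℕ) (hΨ : 2 ≤ Ψ.card) :
    ∑ t ∈ Ψ,
        Real.sqrt (x t ⬝ᵥ
          (((1 : Matrix (Fin d) (Fin d) ℝ) +
              ∑ τ ∈ Ψ.filter (· < t), vecMulVec (x τ) (x τ))⁻¹ *ᵥ x t))
      ≤ 5 * Real.sqrt (d * Ψ.card * Real.log Ψ.card) :=
  sum_width_bound_general x hx Ψ hΨ
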